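/- arXiv:2404.11460 — 3 statements merged into one kernel-verified Lean document; each statement's English description precedes it below -/
import Mathlib

section
/- For all real numbers α, β with 0 < α < β < 1, the trapezoid T(αβ) admits a dissection into two pieces, each affinely equivalent to Q(α, β). -/
/-!
Cut `T(αβ)` along the segment from `S = (0, (1-β)/(1-αβ))` on the left side to
`R = (α, (1-α)/(1-αβ))` on the slanted side. The lower piece `(1,0) R S (0,0)` and the upper
piece `S (0,1) (αβ,1) R` are images of `Q(α,β)` under explicit affine maps of nonzero
determinant. The pieces lie in opposite closed half-planes of the line `SR`, so their interiors
are disjoint. They cover the trapezoid because it is the convex join of the two pieces and every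
segment joining them crosses the line `SR` inside the trapezoid, which means on `[S, R]`.
-/

open Set

/-- For `0 < α < β < 1`, `Qab α β` is the convex quadrangle `Q(α,β)` with vertices
`a = (0,0)`, `b = (1−α,0)`, `c = (1−β, 1−(1−β)/(1−α))`, `d = (0, 1−α(1−β)/((1−α)β))`. -/
noncomputable def Qab (α β : ℝ) : Set (ℝ × ℝ) :=
  convexHull ℝ {((0 : ℝ), (0 : ℝ)), (1 - α, 0), (1 - β, 1 - (1 - β) / (1 - α)),
    (0, 1 - α * (1 - β) / ((1 - α) * β))}

/-- For `0 < γ < 1`, `Tg γ` is the trapezoid `T(γ)` with vertices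
`(0,0)`, `(1,0)`, `(γ,1)`, `(0,1)`. -/
noncomputable def Tg (γ : ℝ) : Set (ℝ × ℝ) :=
  convexHull ℝ {((0 : ℝ), (0 : ℝ)), (1, 0), (γ, 1), (0, 1)}

/-- `B` is the image of `A` under an invertible affine map of the plane,
i.e. `A` and `B` are affinely equivalent. -/
def AffineCopy (A B : Set (ℝ × ℝ)) : Prop :=
  ∃ φ : (ℝ × ℝ) ≃ᵃ[ℝ] (ℝ × ℝ), φ '' A = B

section ConvexCut

variable {E : Type*} [AddCommGroup E] [Module ℝ E]

theorem segment_subset_union_of_mem {x y z : E} (hz : z ∈ segment ℝ x y) :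
    segment ℝ x y ⊆ segment ℝ x z ∪ segment ℝ z y := by
  rw [segment_eq_image_lineMap] at hz
  obtain ⟨c, ⟨hc₀, hc₁⟩, rfl⟩ := hz
  have image_Icc : ∀ a b : ℝ, a ≤ b → AffineMap.lineMap x y '' Icc a b =
      segment ℝ (AffineMap.lineMap x y a) (AffineMap.lineMap x y b) := fun a b hab => by
    rw [← segment_eq_Icc hab, image_segment]
  rw [segment_eq_image_lineMap, ← Icc_union_Icc_eq_Icc hc₀ hc₁, image_union, image_Icc 0 c hc₀,
    image_Icc c 1 hc₁, AffineMap.lineMap_apply_zero, AffineMap.lineMap_apply_one]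

theorem AffineMap.exists_mem_segment_eq_zero (f : E →ᵃ[ℝ] ℝ) {x y : E} (hx : 0 ≤ f x)
    (hy : f y ≤ 0) : ∃ z ∈ segment ℝ x y, f z = 0 := by
  have h0 : (0 : ℝ) ∈ segment ℝ (f x) (f y) := by
    rw [segment_symm, segment_eq_Icc (hy.trans hx)]
    exact ⟨hy, hx⟩
  rwa [← image_segment] at h0

theorem convexJoin_subset_union_of_cut (f : E →ᵃ[ℝ] ℝ) {K₁ K₂ : Set E} (h₁ : Convex ℝ K₁)
    (h₂ : Convex ℝ K₂) (hf₁ : K₁ ⊆ f ⁻¹' Ici 0) (hf₂ : K₂ ⊆ f ⁻¹' Iic 0)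
    (hcut : ∀ z ∈ convexJoin ℝ K₁ K₂, f z = 0 → z ∈ K₁ ∩ K₂) :
    convexJoin ℝ K₁ K₂ ⊆ K₁ ∪ K₂ := by
  intro p hp
  obtain ⟨x, hx, y, hy, hp⟩ := mem_convexJoin.1 hp
  obtain ⟨z, hz, hfz⟩ := f.exists_mem_segment_eq_zero (hf₁ hx) (hf₂ hy)
  obtain ⟨hz₁, hz₂⟩ := hcut z (segment_subset_convexJoin hx hy hz) hfz
  exact union_subset_union (h₁.segment_subset hx hz₁) (h₂.segment_subset hz₂ hy)
    (segment_subset_union_of_mem hz hp)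

end ConvexCut

theorem disjoint_interior_of_subset_preimage {X : Type*} [TopologicalSpace X] {f : X → ℝ}
    (hf : IsOpenMap f) (hfc : Continuous f) {K₁ K₂ : Set X} (h₁ : K₁ ⊆ f ⁻¹' Ici 0)
    (h₂ : K₂ ⊆ f ⁻¹' Iic 0) : Disjoint (interior K₁) (interior K₂) := by
  have hi₁ : interior K₁ ⊆ f ⁻¹' Ioi 0 := by
    rw [← interior_Ici, hf.preimage_interior_eq_interior_preimage hfc]
    exact interior_mono h₁
  have hi₂ : interior K₂ ⊆ f ⁻¹' Iio 0 := by
    rw [← interior_Iic, hf.preimage_interior_eq_interior_preimage hfc]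
    exact interior_mono h₂
  exact (Ioi_disjoint_Iio_same.preimage f).mono hi₁ hi₂

noncomputable def affineEquivOfDet (a b c d e f : ℝ) (h : a * d - b * c ≠ 0) :
    (ℝ × ℝ) ≃ᵃ[ℝ] ℝ × ℝ :=
  (Matrix.toLinearEquiv (Module.Basis.finTwoProd ℝ) !![a, b; c, d]
    (by simpa [Matrix.det_fin_two_of] using h)).toAffineEquiv.trans
    (AffineEquiv.constVAdd ℝ (ℝ × ℝ) (e, f))

theorem affineEquivOfDet_apply (a b c d e f : ℝ) (h : a * d - b * c ≠ 0) (p : ℝ × ℝ) :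
    affineEquivOfDet a b c d e f h p = (a * p.1 + b * p.2 + e, c * p.1 + d * p.2 + f) := by
  simp [affineEquivOfDet, Matrix.toLin_finTwoProd_apply, vadd_eq_add, add_comm]

theorem affineCopy_convexHull_of_image_eq {s t : Set (ℝ × ℝ)} (φ : (ℝ × ℝ) ≃ᵃ[ℝ] ℝ × ℝ)
    (h : φ '' s = t) : AffineCopy (convexHull ℝ s) (convexHull ℝ t) :=
  ⟨φ, h ▸ φ.toAffineMap.image_convexHull s⟩

theorem Tg_subset_halfPlanes {γ : ℝ} (hγ : 0 ≤ γ) :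
    Tg γ ⊆ {p | 0 ≤ p.1} ∩ {p | p.1 + (1 - γ) * p.2 ≤ 1} := by
  refine convexHull_min ?_ ((convex_halfSpace_ge (LinearMap.fst ℝ ℝ ℝ).isLinear 0).inter
    (convex_halfSpace_le (LinearMap.fst ℝ ℝ ℝ + (1 - γ) • LinearMap.snd ℝ ℝ ℝ).isLinear 1))
  simp only [insert_subset_iff, singleton_subset_iff, mem_inter_iff, mem_ofPred_eq]
  norm_num [hγ]

noncomputable def cutLeft (α β : ℝ) : ℝ × ℝ := (0, (1 - β) / (1 - α * β))

noncomputable def cutRight (α β : ℝ) : ℝ × ℝ := (α, (1 - α) / (1 - α * β))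

noncomputable def cutForm (α β : ℝ) : (ℝ × ℝ) →ᵃ[ℝ] ℝ :=
  ((β - α) • LinearMap.fst ℝ ℝ ℝ - (α * (1 - α * β)) • LinearMap.snd ℝ ℝ ℝ).toAffineMap +
    AffineMap.const ℝ (ℝ × ℝ) (α * (1 - β))

noncomputable def lowerPiece (α β : ℝ) : Set (ℝ × ℝ) :=
  convexHull ℝ {(1, 0), cutRight α β, cutLeft α β, (0, 0)}

noncomputable def upperPiece (α β : ℝ) : Set (ℝ × ℝ) :=
  convexHull ℝ {cutLeft α β, (0, 1), (α * β, 1), cutRight α β}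

theorem cutForm_apply (α β : ℝ) (p : ℝ × ℝ) :
    cutForm α β p = (β - α) * p.1 - α * (1 - α * β) * p.2 + α * (1 - β) := rfl

theorem cutForm_cutLeft {α β : ℝ} (h : 1 - α * β ≠ 0) : cutForm α β (cutLeft α β) = 0 := by
  rw [cutForm_apply, cutLeft, mul_assoc, mul_div_cancel₀ _ h]
  ring

theorem cutForm_cutRight {α β : ℝ} (h : 1 - α * β ≠ 0) : cutForm α β (cutRight α β) = 0 := by
  rw [cutForm_apply, cutRight, mul_assoc, mul_div_cancel₀ _ h]
  ring

theorem cutForm_isOpenMap {α β : ℝ} (hαβ : α ≠ β) : IsOpenMap (cutForm α β) := by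
  refine (cutForm α β).isOpenMap (cutForm α β).continuous_of_finiteDimensional fun r => ?_
  refine ⟨((r - α * (1 - β)) / (β - α), 0), ?_⟩
  rw [cutForm_apply]
  field_simp [sub_ne_zero.2 hαβ.symm]
  ring

section Dissection

variable {α β : ℝ}

theorem cutLeft_mem_segment (hα : 0 < α) (hαβ : α < β) (hβ : β < 1) :
    cutLeft α β ∈ segment ℝ (0, 0) (0, 1) := by
  have hαβ1 : 0 < 1 - α * β := by nlinarith
  rw [segment_eq_image]
  refine ⟨(1 - β) / (1 - α * β), ⟨div_nonneg (by linarith) hαβ1.le, ?_⟩, by simp [cutLeft]⟩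
  rw [div_le_one hαβ1]
  nlinarith

theorem cutRight_mem_segment (hα : 0 < α) (hαβ : α < β) (hβ : β < 1) :
    cutRight α β ∈ segment ℝ (1, 0) (α * β, 1) := by
  have hαβ1 : 0 < 1 - α * β := by nlinarith
  rw [segment_eq_image]
  refine ⟨(1 - α) / (1 - α * β), ⟨div_nonneg (by linarith) hαβ1.le, ?_⟩, Prod.ext ?_ ?_⟩
  · rw [div_le_one hαβ1]
    nlinarith
  · simp only [cutRight, Prod.fst_add, Prod.smul_fst, smul_eq_mul]
    field_simp
    ring
  · simp [cutRight]

theorem mem_segment_cutLeft_cutRight (hα : 0 < α) (hαβ : α < β) (hβ : β < 1) {z : ℝ × ℝ}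
    (hz : z ∈ {p : ℝ × ℝ | 0 ≤ p.1} ∩ {p | p.1 + (1 - α * β) * p.2 ≤ 1})
    (hcut : cutForm α β z = 0) : z ∈ segment ℝ (cutLeft α β) (cutRight α β) := by
  obtain ⟨h₁, h₂⟩ := hz
  rw [mem_ofPred_eq] at h₁ h₂
  rw [cutForm_apply] at hcut
  have hαβ1 : 1 - α * β ≠ 0 := by nlinarith
  have hz₁ : z.1 ≤ α := by nlinarith
  rw [segment_eq_image]
  refine ⟨z.1 / α, ⟨by positivity, (div_le_one hα).2 hz₁⟩, Prod.ext ?_ ?_⟩ <;>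
    simp only [cutLeft, cutRight, Prod.fst_add, Prod.snd_add, Prod.smul_fst, Prod.smul_snd,
      smul_eq_mul]
  · field_simp
    ring
  · field_simp
    linear_combination hcut

theorem lowerPiece_subset_preimage_Ici (hα : 0 < α) (hαβ : α < β) (hβ : β < 1) :
    lowerPiece α β ⊆ cutForm α β ⁻¹' Ici 0 := by
  refine convexHull_min ?_ ((convex_Ici 0).affine_preimage (cutForm α β))
  have hαβ1 : 1 - α * β ≠ 0 := by nlinarith
  simp only [insert_subset_iff, singleton_subset_iff, mem_preimage, mem_Ici, cutForm_cutLeft hαβ1,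
    cutForm_cutRight hαβ1, le_refl, true_and, cutForm_apply]
  constructor <;> nlinarith

theorem upperPiece_subset_preimage_Iic (hα : 0 < α) (hαβ : α < β) (hβ : β < 1) :
    upperPiece α β ⊆ cutForm α β ⁻¹' Iic 0 := by
  refine convexHull_min ?_ ((convex_Iic 0).affine_preimage (cutForm α β))
  have hαβ1 : 1 - α * β ≠ 0 := by nlinarith
  have hαβ0 : 0 < α * β := mul_pos hα (hα.trans hαβ)
  simp only [insert_subset_iff, singleton_subset_iff, mem_preimage, mem_Iic, cutForm_cutLeft hαβ1,
    cutForm_cutRight hαβ1, le_refl, true_and, and_true, cutForm_apply]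
  constructor <;> nlinarith

theorem convexJoin_lowerPiece_upperPiece (hα : 0 < α) (hαβ : α < β) (hβ : β < 1) :
    convexJoin ℝ (lowerPiece α β) (upperPiece α β) = Tg (α * β) := by
  rw [lowerPiece, upperPiece, ← convexHull_union (insert_nonempty _ _) (insert_nonempty _ _), Tg]
  refine (convexHull_min ?_ (convex_convexHull ℝ _)).antisymm (convexHull_mono ?_)
  · have hS := segment_subset_convexHull (s := {((0 : ℝ), (0 : ℝ)), (1, 0), (α * β, 1), (0, 1)})
      (by simp) (by simp) (cutLeft_mem_segment hα hαβ hβ)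
    have hR := segment_subset_convexHull (s := {((0 : ℝ), (0 : ℝ)), (1, 0), (α * β, 1), (0, 1)})
      (by simp) (by simp) (cutRight_mem_segment hα hαβ hβ)
    simp only [union_subset_iff, insert_subset_iff, singleton_subset_iff]
    refine ⟨⟨?_, hR, hS, ?_⟩, ⟨hS, ?_, ?_, hR⟩⟩ <;> exact subset_convexHull ℝ _ (by simp)
  · simp only [insert_subset_iff, singleton_subset_iff, mem_union, mem_insert_iff,
      mem_singleton_iff, true_or, or_true, and_self]

theorem lowerPiece_union_upperPiece (hα : 0 < α) (hαβ : α < β) (hβ : β < 1) :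
    lowerPiece α β ∪ upperPiece α β = Tg (α * β) := by
  have hJ := convexJoin_lowerPiece_upperPiece hα hαβ hβ
  refine (union_subset ?_ ?_).antisymm ?_
  · exact hJ ▸ subset_convexJoin_left (convexHull_nonempty_iff.2 (insert_nonempty _ _))
  · exact hJ ▸ subset_convexJoin_right (convexHull_nonempty_iff.2 (insert_nonempty _ _))
  rw [← hJ]
  refine convexJoin_subset_union_of_cut (cutForm α β) (convex_convexHull ℝ _)
    (convex_convexHull ℝ _) (lowerPiece_subset_preimage_Ici hα hαβ hβ)
    (upperPiece_subset_preimage_Iic hα hαβ hβ) fun z hz hcut => ?_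
  have hzS := mem_segment_cutLeft_cutRight hα hαβ hβ
    (Tg_subset_halfPlanes (mul_pos hα (hα.trans hαβ)).le (hJ ▸ hz)) hcut
  exact ⟨segment_subset_convexHull (by simp) (by simp) hzS,
    segment_subset_convexHull (by simp) (by simp) hzS⟩

theorem affineCopy_Qab_lowerPiece (hα : 0 < α) (hαβ : α < β) (hβ : β < 1) :
    AffineCopy (Qab α β) (lowerPiece α β) := by
  have h1α : 0 < 1 - α := by linarith
  have hβα : 0 < β - α := by linarith
  have hβ0 : 0 < β := hα.trans hαβ
  have hαβ1 : 0 < 1 - α * β := by nlinarith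
  have hβα1 : 1 - β * α ≠ 0 := by rw [mul_comm]; exact hαβ1.ne'
  have hdet : -1 * 0 - -((1 - α) * β / (β - α)) * (1 / (1 - α * β)) ≠ 0 := by
    have : 0 < (1 - α) * β / (β - α) * (1 / (1 - α * β)) := by positivity
    linarith
  refine affineCopy_convexHull_of_image_eq
    (affineEquivOfDet (-1) (-((1 - α) * β / (β - α))) (1 / (1 - α * β)) 0 1 0 hdet) ?_
  simp only [image_insert_eq, image_singleton, affineEquivOfDet_apply, cutLeft, cutRight]
  refine congrArg₂ _ ?_ (congrArg₂ _ ?_ (congrArg₂ _ ?_ (congrArg _ ?_))) <;>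
    refine Prod.ext ?_ ?_ <;> field_simp <;> ring

theorem affineCopy_Qab_upperPiece (hα : 0 < α) (hαβ : α < β) (hβ : β < 1) :
    AffineCopy (Qab α β) (upperPiece α β) := by
  have h1α : 0 < 1 - α := by linarith
  have hβα : 0 < β - α := by linarith
  have hβ0 : 0 < β := hα.trans hαβ
  have hαβ1 : 0 < 1 - α * β := by nlinarith
  have hβα1 : 1 - β * α ≠ 0 := by rw [mul_comm]; exact hαβ1.ne'
  have hdet : 0 * ((1 - α) * β / (1 - α * β)) - α * (1 - α) * β / (β - α) * (β / (1 - α * β))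
      ≠ 0 := by
    have : 0 < α * (1 - α) * β / (β - α) * (β / (1 - α * β)) := by positivity
    linarith
  refine affineCopy_convexHull_of_image_eq (affineEquivOfDet 0 (α * (1 - α) * β / (β - α))
    (β / (1 - α * β)) ((1 - α) * β / (1 - α * β)) 0 ((1 - β) / (1 - α * β)) hdet) ?_
  simp only [image_insert_eq, image_singleton, affineEquivOfDet_apply, cutLeft, cutRight]
  refine congrArg₂ _ ?_ (congrArg₂ _ ?_ (congrArg₂ _ ?_ (congrArg _ ?_))) <;>
    refine Prod.ext ?_ ?_ <;> field_simp <;> ring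

end Dissection

/-- The trapezoid `T(αβ)` admits a dissection into two pieces, each affinely
equivalent to `Q(α,β)`. -/
theorem Tg_into_two_Qab (α β : ℝ) (hα : 0 < α) (hαβ : α < β) (hβ : β < 1) :
    ∃ P₁ P₂ : Set (ℝ × ℝ),
      P₁ ∪ P₂ = Tg (α * β) ∧
      Disjoint (interior P₁) (interior P₂) ∧
      AffineCopy (Qab α β) P₁ ∧ AffineCopy (Qab α β) P₂ := by
  refine ⟨lowerPiece α β, upperPiece α β, lowerPiece_union_upperPiece hα hαβ hβ, ?_,
    affineCopy_Qab_lowerPiece hα hαβ hβ, affineCopy_Qab_upperPiece hα hαβ hβ⟩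
  exact disjoint_interior_of_subset_preimage (cutForm_isOpenMap hαβ.ne)
    (cutForm α β).continuous_of_finiteDimensional (lowerPiece_subset_preimage_Ici hα hαβ hβ)
    (upperPiece_subset_preimage_Iic hα hαβ hβ)
end

section
/- For all real numbers α, β, γ with 0 < α < β < 1 and 0 < γ < 1, the quadrangle Q(αγ, βγ) admits a dissection into two pieces, one affinely equivalent to Q(α, β) and the other affinely equivalent to the trapezoid T(γ). -/
open Set

/-! The vertical line `x = 1 - γ` cuts `Q(αγ, βγ)` into two quadrangles. The vertices `c` and
`d` of `Q(a, b)` lie on the line `y = δ (1 - x)` with `δ = (b - a) / ((1 - a) b)`, so the left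
piece is a trapezoid with two vertical sides, the image of `T(γ)` under
`(x, y) ↦ ((1 - γ) y, δ x)`, and the right piece is the image of `Q(α, β)` under
`(x, y) ↦ (γ x + 1 - γ, k y)` for a suitable `k > 0`. The two pieces cover the quadrangle because
every segment from its side `ad` to its side `bc` crosses the cut. -/

open Topology

section Wbtw

variable {R V P : Type*} [Field R] [LinearOrder R] [IsStrictOrderedRing R] [AddCommGroup V]
  [Module R V] [AddTorsor V P]

theorem Wbtw.wbtw_or_wbtw {z m x w : P} (hm : Wbtw R z m w) (hx : Wbtw R z x w) :
    Wbtw R z x m ∨ Wbtw R m x w := by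
  obtain ⟨t, ht, rfl⟩ := hm
  obtain ⟨r, hr, rfl⟩ := hx
  simp only [AffineMap.lineMap_apply]
  rcases wbtw_or_wbtw_smul_vadd_of_nonneg z (w -ᵥ z) hr.1 ht.1 with h | h
  · exact Or.inl h
  · refine Or.inr (Wbtw.trans_left_right ?_ h)
    simpa [AffineMap.lineMap_apply] using wbtw_lineMap_iff.2 (Or.inr hr)

end Wbtw

section Join

variable {𝕜 E : Type*} [Field 𝕜] [LinearOrder 𝕜] [IsStrictOrderedRing 𝕜] [AddCommGroup E]
  [Module 𝕜 E]

theorem convexJoin_eq_union_of_forall_segment_meets {I J K : Set E} (hI : Convex 𝕜 I)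
    (hJ : Convex 𝕜 J) (hK : K ⊆ convexJoin 𝕜 I J)
    (hmeet : ∀ z ∈ I, ∀ w ∈ J, ∃ m ∈ K, m ∈ segment 𝕜 z w) :
    convexJoin 𝕜 I J = convexJoin 𝕜 I K ∪ convexJoin 𝕜 K J := by
  refine Subset.antisymm (fun x hx => ?_) (union_subset ?_ ?_)
  · obtain ⟨z, hz, w, hw, hx⟩ := mem_convexJoin.1 hx
    obtain ⟨m, hmK, hm⟩ := hmeet z hz w hw
    rcases (mem_segment_iff_wbtw.1 hm).wbtw_or_wbtw (mem_segment_iff_wbtw.1 hx) with h | h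
    · exact Or.inl (mem_convexJoin.2 ⟨z, hz, m, hmK, h.mem_segment⟩)
    · exact Or.inr (mem_convexJoin.2 ⟨m, hmK, w, hw, h.mem_segment⟩)
  · calc convexJoin 𝕜 I K ⊆ convexJoin 𝕜 I (convexJoin 𝕜 I J) := convexJoin_mono_right hK
      _ = convexJoin 𝕜 (convexJoin 𝕜 I I) J := (convexJoin_assoc I I J).symm
      _ ⊆ convexJoin 𝕜 I J := convexJoin_mono_left (convexJoin_subset subset_rfl subset_rfl hI)
  · calc convexJoin 𝕜 K J ⊆ convexJoin 𝕜 (convexJoin 𝕜 I J) J := convexJoin_mono_left hK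
      _ = convexJoin 𝕜 I (convexJoin 𝕜 J J) := convexJoin_assoc I J J
      _ ⊆ convexJoin 𝕜 I J := convexJoin_mono_right (convexJoin_subset subset_rfl subset_rfl hJ)

theorem exists_mem_segment_apply_eq (f : E →ᵃ[𝕜] 𝕜) {z w : E} {t : 𝕜} (hz : f z ≤ t)
    (hw : t ≤ f w) : ∃ m ∈ segment 𝕜 z w, f m = t := by
  rw [← mem_image, image_segment, segment_eq_Icc (hz.trans hw)]
  exact ⟨hz, hw⟩

end Join

theorem disjoint_interior_of_subset_fst {X Y : Type*} [TopologicalSpace X] [PartialOrder X]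
    [TopologicalSpace Y] {P₁ P₂ : Set (X × Y)} {t : X} [(𝓝[≠] t).NeBot]
    (h₁ : P₁ ⊆ {p | t ≤ p.1}) (h₂ : P₂ ⊆ {p | p.1 ≤ t}) :
    Disjoint (interior P₁) (interior P₂) := by
  have hline : P₁ ∩ P₂ ⊆ Prod.fst ⁻¹' {t} := fun p hp => le_antisymm (h₂ hp.2) (h₁ hp.1)
  rw [disjoint_iff_inter_eq_empty, ← interior_inter, ← subset_empty_iff]
  calc interior (P₁ ∩ P₂) ⊆ interior (Prod.fst ⁻¹' {t}) := interior_mono hline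
    _ = ∅ := by
      rw [← isOpenMap_fst.preimage_interior_eq_interior_preimage continuous_fst,
        interior_singleton, preimage_empty]

noncomputable def quadrangle (a b δ : ℝ) : Set (ℝ × ℝ) :=
  convexHull ℝ {(0, 0), (1 - a, 0), (1 - b, b * δ), (0, δ)}

theorem Qab_eq_quadrangle {a b : ℝ} (ha : a ≠ 1) (hb : b ≠ 0) :
    Qab a b = quadrangle a b ((b - a) / ((1 - a) * b)) := by
  have ha' : 1 - a ≠ 0 := sub_ne_zero.2 (Ne.symm ha)
  rw [Qab, quadrangle, show 1 - (1 - b) / (1 - a) = b * ((b - a) / ((1 - a) * b)) by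
      field_simp; ring,
    show 1 - a * (1 - b) / ((1 - a) * b) = (b - a) / ((1 - a) * b) by field_simp; ring]

theorem quadrangle_subset_setOf {a b δ : ℝ} (ha : 0 ≤ a) (hb : 0 ≤ b) (hδ : 0 ≤ δ) :
    quadrangle a b δ ⊆ {p | 0 ≤ p.2 ∧ p.2 + δ * p.1 ≤ δ} := by
  refine convexHull_min ?_ ?_
  · simp only [insert_subset_iff, singleton_subset_iff, mem_ofPred_eq]
    refine ⟨⟨le_rfl, ?_⟩, ⟨le_rfl, ?_⟩, ⟨by positivity, ?_⟩, ⟨hδ, ?_⟩⟩ <;> nlinarith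
  · exact (convex_halfSpace_ge (LinearMap.snd ℝ ℝ ℝ).isLinear 0).inter
      (convex_halfSpace_le (LinearMap.snd ℝ ℝ ℝ + δ • LinearMap.fst ℝ ℝ ℝ).isLinear δ)

/-- The pieces of `quadrangle (a * s) (b * s) δ` on either side of the line `x = 1 - s`. -/
noncomputable def quadrangleRightPart (a b δ s : ℝ) : Set (ℝ × ℝ) :=
  convexHull ℝ {(1 - s, 0), (1 - a * s, 0), (1 - b * s, b * s * δ), (1 - s, s * δ)}

noncomputable def quadrangleLeftPart (δ s : ℝ) : Set (ℝ × ℝ) :=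
  convexHull ℝ {(0, 0), (0, δ), (1 - s, s * δ), (1 - s, 0)}

theorem quadrangle_eq_convexJoin (a b δ : ℝ) :
    quadrangle a b δ =
      convexJoin ℝ (segment ℝ (0, 0) (0, δ)) (segment ℝ (1 - a, 0) (1 - b, b * δ)) := by
  rw [convexJoin_segments, quadrangle]
  congr 1; ext; simp only [mem_insert_iff, mem_singleton_iff]; tauto

theorem segment_subset_quadrangle {a b δ s : ℝ} (ha₁ : a ≤ 1) (hb₁ : b ≤ 1) (hs₀ : 0 ≤ s)
    (hs₁ : s < 1) :
    segment ℝ (1 - s, s * δ) (1 - s, 0) ⊆ quadrangle (a * s) (b * s) δ := by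
  rw [quadrangle_eq_convexJoin]
  refine ((convex_segment _ _).convexJoin (convex_segment _ _)).segment_subset ?_ ?_
  · refine segment_subset_convexJoin (right_mem_segment _ _ _) (right_mem_segment _ _ _) ?_
    have hbs : 0 < 1 - b * s := by nlinarith
    have ht : (1 - s) / (1 - b * s) * (1 - b * s) = 1 - s := div_mul_cancel₀ _ hbs.ne'
    refine ⟨1 - (1 - s) / (1 - b * s), (1 - s) / (1 - b * s), ?_, by positivity, by ring, ?_⟩
    · rw [sub_nonneg, div_le_one hbs]
      nlinarith
    · ext <;> simp only [Prod.fst_add, Prod.snd_add, Prod.smul_fst, Prod.smul_snd, smul_eq_mul]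
      · linear_combination ht
      · linear_combination (-δ) * ht
  · refine segment_subset_convexJoin (left_mem_segment _ _ _) (left_mem_segment _ _ _) ?_
    rw [← Prod.image_mk_segment_left, segment_eq_Icc (by nlinarith)]
    exact ⟨1 - s, ⟨by linarith, by nlinarith⟩, rfl⟩

theorem exists_mem_cut_mem_segment {a b δ s : ℝ} (ha₀ : 0 ≤ a) (ha₁ : a ≤ 1) (hb₀ : 0 ≤ b)
    (hb₁ : b ≤ 1) (hδ : 0 ≤ δ) (hs₀ : 0 ≤ s) (hs₁ : s < 1) {z w : ℝ × ℝ}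
    (hz : z ∈ segment ℝ (0, 0) (0, δ)) (hw : w ∈ segment ℝ (1 - a * s, 0) (1 - b * s, b * s * δ)) :
    ∃ m ∈ segment ℝ (1 - s, s * δ) (1 - s, 0), m ∈ segment ℝ z w := by
  have hz₁ : z.1 ≤ 1 - s := by
    rw [← Prod.image_mk_segment_right] at hz
    obtain ⟨y, -, rfl⟩ := hz
    simpa using hs₁.le
  have hw₁ : 1 - s ≤ w.1 :=
    ((convex_Ici (1 - s)).linear_preimage (LinearMap.fst ℝ ℝ ℝ)).segment_subset
      (show 1 - s ≤ 1 - a * s by nlinarith) (show 1 - s ≤ 1 - b * s by nlinarith) hw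
  obtain ⟨m, hm, hm₁⟩ := exists_mem_segment_apply_eq (LinearMap.fst ℝ ℝ ℝ).toAffineMap hz₁ hw₁
  refine ⟨m, ?_, hm⟩
  have hmQ : m ∈ quadrangle (a * s) (b * s) δ := by
    rw [quadrangle_eq_convexJoin]
    exact segment_subset_convexJoin hz hw hm
  obtain ⟨hm₀, hmδ⟩ := quadrangle_subset_setOf (mul_nonneg ha₀ hs₀) (mul_nonneg hb₀ hs₀) hδ hmQ
  simp only [LinearMap.coe_toAffineMap, LinearMap.fst_apply] at hm₁
  rw [segment_symm, ← Prod.image_mk_segment_right, segment_eq_Icc (by positivity)]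
  exact ⟨m.2, ⟨hm₀, by rw [hm₁] at hmδ; linarith⟩, by ext <;> simp [hm₁]⟩

theorem quadrangle_eq_union {a b δ s : ℝ} (ha₀ : 0 ≤ a) (ha₁ : a ≤ 1) (hb₀ : 0 ≤ b)
    (hb₁ : b ≤ 1) (hδ : 0 ≤ δ) (hs₀ : 0 ≤ s) (hs₁ : s < 1) :
    quadrangle (a * s) (b * s) δ = quadrangleRightPart a b δ s ∪ quadrangleLeftPart δ s := by
  have hright : quadrangleRightPart a b δ s = convexJoin ℝ (segment ℝ (1 - s, s * δ) (1 - s, 0))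
      (segment ℝ (1 - a * s, 0) (1 - b * s, b * s * δ)) := by
    rw [convexJoin_segments, quadrangleRightPart]
    congr 1; ext; simp only [mem_insert_iff, mem_singleton_iff]; tauto
  have hleft : quadrangleLeftPart δ s = convexJoin ℝ (segment ℝ (0, 0) (0, δ))
      (segment ℝ (1 - s, s * δ) (1 - s, 0)) := by
    rw [convexJoin_segments, quadrangleLeftPart]
  rw [hright, hleft, union_comm, quadrangle_eq_convexJoin, mul_assoc]
  refine convexJoin_eq_union_of_forall_segment_meets (convex_segment _ _) (convex_segment _ _)
    ?_ fun z hz w hw => ?_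
  · rw [← mul_assoc, ← quadrangle_eq_convexJoin]
    exact segment_subset_quadrangle ha₁ hb₁ hs₀ hs₁
  · rw [← mul_assoc] at hw
    exact exists_mem_cut_mem_segment ha₀ ha₁ hb₀ hb₁ hδ hs₀ hs₁ hz hw

theorem affineCopy_convexHull (φ : (ℝ × ℝ) ≃ᵃ[ℝ] (ℝ × ℝ)) (S : Set (ℝ × ℝ)) :
    AffineCopy (convexHull ℝ S) (convexHull ℝ (φ '' S)) :=
  ⟨φ, φ.toAffineMap.image_convexHull S⟩

theorem affineCopy_quadrangle_quadrangleRightPart {a b δ δ' s k : ℝ} (hs : s ≠ 0) (hk : k ≠ 0)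
    (h : k * δ' = s * δ) :
    AffineCopy (quadrangle a b δ') (quadrangleRightPart a b δ s) := by
  let φ : (ℝ × ℝ) ≃ᵃ[ℝ] (ℝ × ℝ) :=
    ((LinearEquiv.smulOfNeZero ℝ ℝ s hs).prodCongr
      (LinearEquiv.smulOfNeZero ℝ ℝ k hk)).toAffineEquiv.trans
      (AffineEquiv.constVAdd ℝ (ℝ × ℝ) (1 - s, 0))
  unfold quadrangle quadrangleRightPart
  convert affineCopy_convexHull φ _ using 2
  have e₁ : 1 - s + s * (1 - a) = 1 - a * s := by ring
  have e₂ : 1 - s + s * (1 - b) = 1 - b * s := by ring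
  have e₃ : k * (b * δ') = b * s * δ := by linear_combination b * h
  simp [φ, image_insert_eq, e₁, e₂, e₃, h]

theorem affineCopy_Tg_quadrangleLeftPart {δ s : ℝ} (hs : s ≠ 1) (hδ : δ ≠ 0) :
    AffineCopy (Tg s) (quadrangleLeftPart δ s) := by
  let ψ : (ℝ × ℝ) ≃ᵃ[ℝ] (ℝ × ℝ) :=
    ((LinearEquiv.prodComm ℝ ℝ ℝ).trans ((LinearEquiv.smulOfNeZero ℝ ℝ (1 - s)
      (sub_ne_zero.2 hs.symm)).prodCongr (LinearEquiv.smulOfNeZero ℝ ℝ δ hδ))).toAffineEquiv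
  unfold Tg quadrangleLeftPart
  convert affineCopy_convexHull ψ _ using 2
  simp [ψ, image_insert_eq, mul_comm]

theorem disjoint_interior_quadrangleRightPart_quadrangleLeftPart {a b δ s : ℝ} (ha : a ≤ 1)
    (hb : b ≤ 1) (hs₀ : 0 ≤ s) (hs₁ : s ≤ 1) :
    Disjoint (interior (quadrangleRightPart a b δ s)) (interior (quadrangleLeftPart δ s)) := by
  refine disjoint_interior_of_subset_fst (t := 1 - s)
    (convexHull_min ?_ ((convex_Ici (1 - s)).linear_preimage (LinearMap.fst ℝ ℝ ℝ)))
    (convexHull_min ?_ ((convex_Iic (1 - s)).linear_preimage (LinearMap.fst ℝ ℝ ℝ)))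
  · simp only [insert_subset_iff, singleton_subset_iff, mem_ofPred_eq]
    exact ⟨le_rfl, by nlinarith, by nlinarith, le_rfl⟩
  · simp only [insert_subset_iff, singleton_subset_iff, mem_ofPred_eq]
    exact ⟨by linarith, by linarith, le_rfl, le_rfl⟩

/-- The quadrangle `Q(αγ, βγ)` admits a dissection into two pieces, one affinely
equivalent to `Q(α,β)` and the other affinely equivalent to the trapezoid `T(γ)`. -/
theorem Qab_dot_Tg (α β γ : ℝ)
    (hα : 0 < α) (hαβ : α < β) (hβ : β < 1) (hγ₀ : 0 < γ) (hγ₁ : γ < 1) :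
    ∃ P₁ P₂ : Set (ℝ × ℝ),
      P₁ ∪ P₂ = Qab (α * γ) (β * γ) ∧
      Disjoint (interior P₁) (interior P₂) ∧
      AffineCopy (Qab α β) P₁ ∧ AffineCopy (Tg γ) P₂ := by
  have hβ₀ : 0 < β := hα.trans hαβ
  have hαγ : 0 < 1 - α * γ := by nlinarith
  set δ := (β * γ - α * γ) / ((1 - α * γ) * (β * γ)) with hδ_def
  have hδ : 0 < δ := div_pos (by nlinarith) (by positivity)
  refine ⟨quadrangleRightPart α β δ γ, quadrangleLeftPart δ γ, ?_,
    disjoint_interior_quadrangleRightPart_quadrangleLeftPart (hαβ.trans hβ).le hβ.le hγ₀.le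
      hγ₁.le, ?_,
    affineCopy_Tg_quadrangleLeftPart hγ₁.ne hδ.ne'⟩
  · rw [Qab_eq_quadrangle (by nlinarith) (by positivity),
      quadrangle_eq_union hα.le (by linarith) hβ₀.le hβ.le hδ.le hγ₀.le hγ₁]
  · rw [Qab_eq_quadrangle (by linarith) hβ₀.ne']
    have hα₁ : 1 - α ≠ 0 := by linarith
    refine affineCopy_quadrangle_quadrangleRightPart (k := γ * (1 - α) / (1 - α * γ))
      hγ₀.ne' (by positivity) ?_
    rw [hδ_def]
    field_simp
end

section
/- For all real numbers γ₀, γ with 0 < γ₀ < γ < 1, the trapezoid T(γ) admits a dissection into two pieces, one of which is a parallelogram (an invertible affine image of the unit square [0,1]²) and the other affinely equivalent to T(γ₀). -/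
/-!
Cut `T(γ)` along the vertical line `x = s`, where `s = (γ - γ₀) / (1 - γ₀)`. The left piece is the
rectangle `[0, s] × [0, 1]`, a stretched unit square. The right piece has vertices `(s, 0)`, `(1, 0)`,
`(γ, 1)`, `(s, 1)`; it is the image of `T(γ₀)` under `(x, y) ↦ ((1 - s) x + s, y)`, because this map
fixes `(1, 0)` and sends `(γ₀, 1)` to `((1 - s) γ₀ + s, 1) = (γ, 1)`. Describing every trapezoid of
this shape by four half-planes turns the remaining claims into linear arithmetic.
-/

open Set

noncomputable def trapezoid (a c : ℝ) : Set (ℝ × ℝ) :=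
  convexHull ℝ {(a, 0), (1, 0), (c, 1), (a, 1)}

theorem Tg_eq_trapezoid (γ : ℝ) : Tg γ = trapezoid 0 γ := rfl

theorem Convex.mk_mem_of_le_of_le {F : Type*} [AddCommGroup F] [Module ℝ F]
    {K : Set (ℝ × F)} (hK : Convex ℝ K) {x₁ x₂ x : ℝ} {y : F}
    (h₁ : (x₁, y) ∈ K) (h₂ : (x₂, y) ∈ K) (hx₁ : x₁ ≤ x) (hx₂ : x ≤ x₂) : (x, y) ∈ K := by
  refine hK.segment_subset h₁ h₂ ?_
  rw [← Prod.image_mk_segment_left, segment_eq_Icc (hx₁.trans hx₂)]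
  exact ⟨x, ⟨hx₁, hx₂⟩, rfl⟩

section Trapezoid

variable {a c : ℝ}

theorem trapezoid_subset_setOf (ha : a ≤ 1) (hac : a ≤ c) :
    trapezoid a c ⊆ {p | a ≤ p.1 ∧ 0 ≤ p.2 ∧ p.2 ≤ 1 ∧ p.1 + (1 - c) * p.2 ≤ 1} := by
  refine convexHull_min ?_ ?_
  · simp only [insert_subset_iff, singleton_subset_iff, mem_ofPred_eq]
    refine ⟨?_, ?_, ?_, ?_⟩ <;> refine ⟨?_, ?_, ?_, ?_⟩ <;> linarith
  · rintro p ⟨hp₁, hp₂, hp₃, hp₄⟩ q ⟨hq₁, hq₂, hq₃, hq₄⟩ s t hs ht hst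
    simp only [mem_ofPred_eq, Prod.fst_add, Prod.snd_add, Prod.smul_fst, Prod.smul_snd,
      smul_eq_mul]
    refine ⟨?_, ?_, ?_, ?_⟩ <;> nlinarith

theorem setOf_subset_trapezoid :
    {p : ℝ × ℝ | a ≤ p.1 ∧ 0 ≤ p.2 ∧ p.2 ≤ 1 ∧ p.1 + (1 - c) * p.2 ≤ 1} ⊆ trapezoid a c := by
  rintro ⟨x, y⟩ ⟨hx, hy₀, hy₁, hxy⟩
  have hK : Convex ℝ (trapezoid a c) := convex_convexHull ℝ _
  have vertex : ∀ {v : ℝ × ℝ}, v ∈ ({(a, 0), (1, 0), (c, 1), (a, 1)} : Set (ℝ × ℝ)) →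
      v ∈ trapezoid a c := fun hv ↦ subset_convexHull ℝ _ hv
  have left : (a, y) ∈ trapezoid a c := by
    refine hK.segment_subset (x := (a, 0)) (y := (a, 1)) (vertex (by simp)) (vertex (by simp)) ?_
    rw [← Prod.image_mk_segment_right, segment_eq_Icc zero_le_one]
    exact ⟨y, ⟨hy₀, hy₁⟩, rfl⟩
  have right : (1 - (1 - c) * y, y) ∈ trapezoid a c := by
    refine hK.segment_subset (x := (1, 0)) (y := (c, 1)) (vertex (by simp)) (vertex (by simp)) ?_
    rw [segment_eq_image_lineMap]
    refine ⟨y, ⟨hy₀, hy₁⟩, ?_⟩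
    simp only [AffineMap.lineMap_apply_module, Prod.smul_mk, smul_eq_mul, Prod.mk_add_mk,
      Prod.mk.injEq]
    constructor <;> ring
  exact hK.mk_mem_of_le_of_le left right hx (by linarith)

theorem trapezoid_eq_setOf (ha : a ≤ 1) (hac : a ≤ c) :
    trapezoid a c = {p | a ≤ p.1 ∧ 0 ≤ p.2 ∧ p.2 ≤ 1 ∧ p.1 + (1 - c) * p.2 ≤ 1} :=
  (trapezoid_subset_setOf ha hac).antisymm setOf_subset_trapezoid

theorem Icc_union_trapezoid {s : ℝ} (has : a ≤ s) (hs : s ≤ 1) (hsc : s ≤ c) :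
    Icc (a, 0) (s, 1) ∪ trapezoid s c = trapezoid a c := by
  rw [trapezoid_eq_setOf hs hsc, trapezoid_eq_setOf (has.trans hs) (has.trans hsc)]
  ext ⟨x, y⟩
  simp only [mem_union, mem_Icc, Prod.mk_le_mk, mem_ofPred_eq]
  constructor
  · rintro (⟨⟨hx, hy₀⟩, hxs, hy₁⟩ | ⟨hx, hy₀, hy₁, hxy⟩)
    · exact ⟨hx, hy₀, hy₁, by nlinarith⟩
    · exact ⟨has.trans hx, hy₀, hy₁, hxy⟩
  · rintro ⟨hx, hy₀, hy₁, hxy⟩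
    rcases le_total x s with hxs | hsx
    · exact Or.inl ⟨⟨hx, hy₀⟩, hxs, hy₁⟩
    · exact Or.inr ⟨hsx, hy₀, hy₁, hxy⟩

end Trapezoid

theorem disjoint_interior_of_fst_le_of_le_fst {F : Type*} [TopologicalSpace F]
    {A B : Set (ℝ × F)} (s : ℝ) (hA : A ⊆ Prod.fst ⁻¹' Iic s) (hB : B ⊆ Prod.fst ⁻¹' Ici s) :
    Disjoint (interior A) (interior B) := by
  have interior_fst_preimage (I : Set ℝ) : interior (Prod.fst ⁻¹' I : Set (ℝ × F)) =
      Prod.fst ⁻¹' interior I :=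
    (isOpenMap_fst.preimage_interior_eq_interior_preimage continuous_fst I).symm
  have hA' := (interior_mono hA).trans_eq (interior_fst_preimage _)
  have hB' := (interior_mono hB).trans_eq (interior_fst_preimage _)
  rw [interior_Iic] at hA'
  rw [interior_Ici] at hB'
  exact ((Iio_disjoint_Ioi_same (a := s)).preimage Prod.fst).mono hA' hB'

noncomputable def stretchFst (a b : ℝ) (ha : a ≠ 0) : (ℝ × ℝ) ≃ᵃ[ℝ] (ℝ × ℝ) :=
  ((LinearEquiv.smulOfNeZero ℝ ℝ a ha).toAffineEquiv.trans
    (AffineEquiv.constVAdd ℝ ℝ b)).prodCongr (AffineEquiv.refl ℝ ℝ)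

theorem stretchFst_apply (a b : ℝ) (ha : a ≠ 0) (p : ℝ × ℝ) :
    stretchFst a b ha p = (a * p.1 + b, p.2) := by
  simp [stretchFst, add_comm]

theorem stretchFst_image_Icc {a : ℝ} (b : ℝ) (ha : 0 < a) (p q : ℝ × ℝ) :
    stretchFst a b ha.ne' '' Icc p q = Icc (a * p.1 + b, p.2) (a * q.1 + b, q.2) := by
  have : ⇑(stretchFst a b ha.ne') = Prod.map (a * · + b) id :=
    funext fun p ↦ stretchFst_apply a b ha.ne' p
  rw [this, Icc_prod_eq, Icc_prod_eq, prodMap_image_prod, image_affine_Icc' ha, image_id]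

theorem stretchFst_image_trapezoid {s : ℝ} (hs : s ≠ 1) (a c : ℝ) :
    stretchFst (1 - s) s (sub_ne_zero.2 hs.symm) '' trapezoid a c =
      trapezoid ((1 - s) * a + s) ((1 - s) * c + s) := by
  rw [trapezoid, ← AffineEquiv.coe_toAffineMap, AffineMap.image_convexHull]
  simp only [AffineEquiv.coe_toAffineMap, image_insert_eq, image_singleton, stretchFst_apply]
  norm_num [trapezoid]

/-- For `0 < γ₀ < γ < 1`, the trapezoid `T(γ)` admits a dissection into a parallelogram
(an invertible affine image of the unit square) and an affine copy of `T(γ₀)`. -/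
theorem Tg_into_parallelogram_and_Tg (γ₀ γ : ℝ)
    (h₀ : 0 < γ₀) (h₁ : γ₀ < γ) (h₂ : γ < 1) :
    ∃ P₁ P₂ : Set (ℝ × ℝ),
      P₁ ∪ P₂ = Tg γ ∧ Disjoint (interior P₁) (interior P₂) ∧
      AffineCopy (Icc ((0 : ℝ), (0 : ℝ)) (1, 1)) P₁ ∧ AffineCopy (Tg γ₀) P₂ := by
  set s := (γ - γ₀) / (1 - γ₀) with hs
  have hγ₀ : 0 < 1 - γ₀ := by linarith
  have hs₀ : 0 < s := div_pos (by linarith) hγ₀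
  have hsγ : s ≤ γ := by rw [hs, div_le_iff₀ hγ₀]; nlinarith
  have hs₁ : s < 1 := hsγ.trans_lt h₂
  have hγ : (1 - s) * γ₀ + s = γ := by rw [hs]; field_simp; ring
  refine ⟨Icc (0, 0) (s, 1), trapezoid s γ, Icc_union_trapezoid hs₀.le hs₁.le hsγ, ?_,
    ⟨stretchFst s 0 hs₀.ne', ?_⟩, ⟨stretchFst (1 - s) s (by linarith), ?_⟩⟩
  · refine disjoint_interior_of_fst_le_of_le_fst s (fun p hp ↦ hp.2.1) fun p hp ↦ ?_
    exact (trapezoid_subset_setOf hs₁.le hsγ hp).1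
  · simpa using stretchFst_image_Icc 0 hs₀ (0, 0) (1, 1)
  · simpa [Tg_eq_trapezoid, hγ] using stretchFst_image_trapezoid hs₁.ne 0 γ₀
end
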